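/- Let n ≥ 1, let A be an n×n real matrix and let b ∈ ℝⁿ. Let X* ∈ ℝⁿ be the vector with components X*_j = per(A_[j]) − per(A), where A_[j] is the matrix formed by replacing the j-th column of A by the column vector b. Then X* is the maximal solution of the system A ⊙ X = b (i.e., A ⊙ X* = b and every solution Y ∈ ℝⁿ satisfies Y ≤ X* entrywise) if and only if (A ⊙ A⁻)_{ij} ≤ b_i − b_j for all i, j ∈ {1,…,n}. -/

import Mathlib

open Matrix

/-- Tropical (max-plus) permanent of a square real matrix:
`per(A) = max over permutations σ of ∑ i, A i (σ i)`. -/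
noncomputable def tperm {p : ℕ} (A : Matrix (Fin p) (Fin p) ℝ) : ℝ :=
  Finset.univ.sup' ⟨1, Finset.mem_univ 1⟩
    (fun σ : Equiv.Perm (Fin p) => ∑ i, A i (σ i))

/-- `del A i j` is the matrix obtained from `A` by deleting row `i` and column `j`. -/
def del {p : ℕ} (A : Matrix (Fin (p+1)) (Fin (p+1)) ℝ) (i j : Fin (p+1)) :
    Matrix (Fin p) (Fin p) ℝ :=
  A.submatrix i.succAbove j.succAbove

/-- Tropical (max-plus) matrix product: `(P ⊙ Q) i j = max_k (P i k + Q k j)`. -/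
noncomputable def tmul {l m n : ℕ} (P : Matrix (Fin l) (Fin (m+1)) ℝ)
    (Q : Matrix (Fin (m+1)) (Fin n) ℝ) : Matrix (Fin l) (Fin n) ℝ :=
  fun i j => Finset.univ.sup' ⟨0, Finset.mem_univ 0⟩ (fun k => P i k + Q k j)

/-- Tropical (max-plus) matrix-vector product: `(P ⊙ x) i = max_k (P i k + x k)`. -/
noncomputable def tmulVec {l m : ℕ} (P : Matrix (Fin l) (Fin (m+1)) ℝ)
    (x : Fin (m+1) → ℝ) : Fin l → ℝ :=
  fun i => Finset.univ.sup' ⟨0, Finset.mem_univ 0⟩ (fun k => P i k + x k)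

/-- The ε-adjoint: `adj(A)_{ij} = per(A(j|i))`. -/
noncomputable def tadj {p : ℕ} (A : Matrix (Fin (p+1)) (Fin (p+1)) ℝ) :
    Matrix (Fin (p+1)) (Fin (p+1)) ℝ :=
  fun i j => tperm (del A j i)

/-- The pseudo-inverse: `A⁻_{ij} = per(A(j|i)) - per(A)`. -/
noncomputable def pinv {p : ℕ} (A : Matrix (Fin (p+1)) (Fin (p+1)) ℝ) :
    Matrix (Fin (p+1)) (Fin (p+1)) ℝ :=
  fun i j => tperm (del A j i) - tperm A


/-!
The tropical Laplace expansion of `per A` along a row, resp. a column, says that `A ⊙ A⁻` and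
`A⁻ ⊙ A` have zero diagonal, and the expansion of `per A_[j]` along its `j`-th column says that
`X* = A⁻ ⊙ b`. As `⊙` is associative and a zero diagonal of `M` gives `x ≤ M ⊙ x`,
`b ≤ (A ⊙ A⁻) ⊙ b = A ⊙ X*` for every `b`, and every solution satisfies
`Y ≤ (A⁻ ⊙ A) ⊙ Y = A⁻ ⊙ b = X*`. So `X*` is the maximal solution exactly when
`(A ⊙ A⁻) ⊙ b ≤ b`, which is the stated condition.
-/

section TropicalProduct

variable {l m p : ℕ}

lemma tmul_apply (P : Matrix (Fin l) (Fin (m+1)) ℝ) (Q : Matrix (Fin (m+1)) (Fin p) ℝ)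
    (i : Fin l) (j : Fin p) :
    tmul P Q i j = Finset.univ.sup' Finset.univ_nonempty (fun k => P i k + Q k j) := rfl

lemma tmulVec_apply (P : Matrix (Fin l) (Fin (m+1)) ℝ) (x : Fin (m+1) → ℝ) (i : Fin l) :
    tmulVec P x i = Finset.univ.sup' Finset.univ_nonempty (fun k => P i k + x k) := rfl

lemma tmulVec_tmul (P : Matrix (Fin l) (Fin (m+1)) ℝ) (Q : Matrix (Fin (m+1)) (Fin (p+1)) ℝ)
    (x : Fin (p+1) → ℝ) : tmulVec (tmul P Q) x = tmulVec P (tmulVec Q x) := by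
  funext i
  simp only [tmulVec_apply, tmul_apply, Finset.sup'_add, Finset.add_sup']
  rw [Finset.sup'_comm]
  exact Finset.sup'_congr _ rfl fun j _ => Finset.sup'_congr _ rfl fun k _ => by ring

lemma add_le_tmulVec (M : Matrix (Fin l) (Fin (m+1)) ℝ) (x : Fin (m+1) → ℝ) (i : Fin l)
    (j : Fin (m+1)) : M i j + x j ≤ tmulVec M x i :=
  Finset.le_sup' (fun k => M i k + x k) (Finset.mem_univ j)

lemma tmulVec_le_iff (M : Matrix (Fin l) (Fin (m+1)) ℝ) (x : Fin (m+1) → ℝ) (i : Fin l)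
    (c : ℝ) : tmulVec M x i ≤ c ↔ ∀ j, M i j + x j ≤ c := by
  simp [tmulVec_apply, Finset.sup'_le_iff]

lemma le_tmulVec_of_diag_eq_zero {M : Matrix (Fin (m+1)) (Fin (m+1)) ℝ} {i : Fin (m+1)}
    (hM : M i i = 0) (x : Fin (m+1) → ℝ) : x i ≤ tmulVec M x i := by
  simpa [hM] using add_le_tmulVec M x i i

end TropicalProduct

lemma exists_tperm_eq_sum {p : ℕ} (M : Matrix (Fin p) (Fin p) ℝ) :
    ∃ σ : Equiv.Perm (Fin p), tperm M = ∑ i, M i (σ i) := by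
  obtain ⟨σ, -, h⟩ := Finset.exists_mem_eq_sup' Finset.univ_nonempty
    (fun σ : Equiv.Perm (Fin p) => ∑ i, M i (σ i))
  exact ⟨σ, h⟩

lemma sum_le_tperm {p : ℕ} (M : Matrix (Fin p) (Fin p) ℝ) (σ : Equiv.Perm (Fin p)) :
    ∑ i, M i (σ i) ≤ tperm M :=
  Finset.le_sup' (fun σ : Equiv.Perm (Fin p) => ∑ i, M i (σ i)) (Finset.mem_univ σ)

section Laplace

variable {n : ℕ}

def extendPerm (k j : Fin (n+1)) (τ : Equiv.Perm (Fin n)) : Equiv.Perm (Fin (n+1)) :=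
  (finSuccEquiv' k).trans ((Equiv.optionCongr τ).trans (finSuccEquiv' j).symm)

lemma extendPerm_apply_self (k j : Fin (n+1)) (τ : Equiv.Perm (Fin n)) :
    extendPerm k j τ k = j := by
  simp [extendPerm, finSuccEquiv'_at, finSuccEquiv'_symm_none]

lemma extendPerm_apply_succAbove (k j : Fin (n+1)) (τ : Equiv.Perm (Fin n)) (i : Fin n) :
    extendPerm k j τ (k.succAbove i) = j.succAbove (τ i) := by
  simp [extendPerm, finSuccEquiv'_succAbove, finSuccEquiv'_symm_some]

lemma exists_perm_apply_succAbove {k j : Fin (n+1)} (σ : Equiv.Perm (Fin (n+1)))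
    (h : σ k = j) : ∃ τ : Equiv.Perm (Fin n), ∀ i, σ (k.succAbove i) = j.succAbove (τ i) := by
  set e := (finSuccEquiv' k).symm.trans (σ.trans (finSuccEquiv' j))
  refine ⟨e.removeNone, fun i => ?_⟩
  have hne : σ (k.succAbove i) ≠ j := h ▸ fun hc => Fin.succAbove_ne k i (σ.injective hc)
  obtain ⟨m, hm⟩ := Fin.exists_succAbove_eq hne
  have hsome : e (some i) = some m := by
    simp only [e, Equiv.trans_apply, finSuccEquiv'_symm_some, ← hm, finSuccEquiv'_succAbove]
  have hremove := Equiv.removeNone_some e ⟨m, hsome⟩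
  rw [hsome, Option.some_inj] at hremove
  rw [hremove, hm]

lemma sum_le_add_tperm_del (M : Matrix (Fin (n+1)) (Fin (n+1)) ℝ) {k j : Fin (n+1)}
    (σ : Equiv.Perm (Fin (n+1))) (h : σ k = j) :
    ∑ i, M i (σ i) ≤ M k j + tperm (del M k j) := by
  obtain ⟨τ, hτ⟩ := exists_perm_apply_succAbove σ h
  rw [Fin.sum_univ_succAbove (fun i => M i (σ i)) k, h]
  gcongr
  calc ∑ i, M (k.succAbove i) (σ (k.succAbove i))
      = ∑ i, del M k j i (τ i) := Finset.sum_congr rfl fun i _ => by rw [hτ i]; rfl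
    _ ≤ tperm (del M k j) := sum_le_tperm _ τ

lemma add_tperm_del_le_tperm (M : Matrix (Fin (n+1)) (Fin (n+1)) ℝ) (k j : Fin (n+1)) :
    M k j + tperm (del M k j) ≤ tperm M := by
  obtain ⟨τ, hτ⟩ := exists_tperm_eq_sum (del M k j)
  calc M k j + tperm (del M k j)
      = ∑ i, M i (extendPerm k j τ i) := by
        rw [hτ, Fin.sum_univ_succAbove (fun i => M i (extendPerm k j τ i)) k,
          extendPerm_apply_self]
        congr 1
        exact Finset.sum_congr rfl fun i _ => by rw [extendPerm_apply_succAbove]; rfl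
    _ ≤ tperm M := sum_le_tperm _ _

theorem tperm_eq_sup'_row (M : Matrix (Fin (n+1)) (Fin (n+1)) ℝ) (k : Fin (n+1)) :
    tperm M = Finset.univ.sup' Finset.univ_nonempty (fun j => M k j + tperm (del M k j)) := by
  obtain ⟨σ, hσ⟩ := exists_tperm_eq_sum M
  refine le_antisymm ?_ (Finset.sup'_le _ _ fun j _ => add_tperm_del_le_tperm M k j)
  exact hσ ▸ Finset.le_sup'_of_le _ (Finset.mem_univ (σ k)) (sum_le_add_tperm_del M σ rfl)

theorem tperm_eq_sup'_col (M : Matrix (Fin (n+1)) (Fin (n+1)) ℝ) (j : Fin (n+1)) :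
    tperm M = Finset.univ.sup' Finset.univ_nonempty (fun k => M k j + tperm (del M k j)) := by
  obtain ⟨σ, hσ⟩ := exists_tperm_eq_sum M
  refine le_antisymm ?_ (Finset.sup'_le _ _ fun k _ => add_tperm_del_le_tperm M k j)
  exact hσ ▸ Finset.le_sup'_of_le _ (Finset.mem_univ (σ.symm j))
    (sum_le_add_tperm_del M σ (σ.apply_symm_apply j))

lemma del_updateCol_self (A : Matrix (Fin (n+1)) (Fin (n+1)) ℝ) (b : Fin (n+1) → ℝ)
    (k j : Fin (n+1)) : del (A.updateCol j b) k j = del A k j := by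
  funext i m
  simp [del, Fin.succAbove_ne]

theorem tperm_updateCol_sub_tperm_eq_tmulVec_pinv (A : Matrix (Fin (n+1)) (Fin (n+1)) ℝ)
    (b : Fin (n+1) → ℝ) (j : Fin (n+1)) :
    tperm (A.updateCol j b) - tperm A = tmulVec (pinv A) b j := by
  simp only [tperm_eq_sup'_col (A.updateCol j b) j, del_updateCol_self,
    Matrix.updateCol_self, sub_eq_add_neg, Finset.sup'_add, tmulVec_apply, pinv]
  exact Finset.sup'_congr _ rfl fun k _ => by ring

lemma tmul_self_pinv_diag (A : Matrix (Fin (n+1)) (Fin (n+1)) ℝ) (i : Fin (n+1)) :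
    tmul A (pinv A) i i = 0 :=
  calc tmul A (pinv A) i i
      = Finset.univ.sup' Finset.univ_nonempty (fun k => A i k + tperm (del A i k)) - tperm A := by
        rw [sub_eq_add_neg, Finset.sup'_add]
        exact Finset.sup'_congr _ rfl fun k _ => by simp only [pinv]; ring
    _ = 0 := by rw [← tperm_eq_sup'_row, sub_self]

lemma tmul_pinv_self_diag (A : Matrix (Fin (n+1)) (Fin (n+1)) ℝ) (j : Fin (n+1)) :
    tmul (pinv A) A j j = 0 :=
  calc tmul (pinv A) A j j
      = Finset.univ.sup' Finset.univ_nonempty (fun k => A k j + tperm (del A k j)) - tperm A := by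
        rw [sub_eq_add_neg, Finset.sup'_add]
        exact Finset.sup'_congr _ rfl fun k _ => by simp only [pinv]; ring
    _ = 0 := by rw [← tperm_eq_sup'_col, sub_self]

end Laplace

/-- extended Cramer's rule: Let `X*_j = per(A_[j]) - per(A)`, where `A_[j]` is
`A` with its `j`-th column replaced by `b`. Then `X*` is the maximal solution of `A ⊙ X = b`
(i.e. `A ⊙ X* = b` and every solution `Y` satisfies `Y ≤ X*`) if and only if
`(A ⊙ A⁻)_{ij} ≤ b_i - b_j` for all `i, j`. -/
theorem stmt8 {n : ℕ} (A : Matrix (Fin (n+1)) (Fin (n+1)) ℝ) (b : Fin (n+1) → ℝ) :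
    ((∀ i, tmulVec A (fun j => tperm (A.updateCol j b) - tperm A) i = b i) ∧
      (∀ Y : Fin (n+1) → ℝ, (∀ i, tmulVec A Y i = b i) →
        ∀ j, Y j ≤ tperm (A.updateCol j b) - tperm A)) ↔
    (∀ i j, tmul A (pinv A) i j ≤ b i - b j) := by
  simp only [tperm_updateCol_sub_tperm_eq_tmulVec_pinv, ← tmulVec_tmul]
  constructor
  · rintro ⟨hsol, -⟩ i j
    have := (tmulVec_le_iff _ b i (b i)).1 (hsol i).le j
    linarith
  · intro h
    refine ⟨fun i => le_antisymm ?_ (le_tmulVec_of_diag_eq_zero (tmul_self_pinv_diag A i) b),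
      fun Y hY j => ?_⟩
    · exact (tmulVec_le_iff _ b i (b i)).2 fun k => by linarith [h i k]
    · have hb : tmulVec A Y = b := funext hY
      calc Y j ≤ tmulVec (tmul (pinv A) A) Y j :=
            le_tmulVec_of_diag_eq_zero (tmul_pinv_self_diag A j) Y
        _ = tmulVec (pinv A) b j := by rw [tmulVec_tmul, hb]
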